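/- For every countable ordinal ξ, the Schreier family 𝒮_ξ is regular and its Cantor–Bendixson index equals ω^ξ + 1. -/

import Mathlib

/-- Identify a finite subset of `ℕ` with a point of the Cantor space `ℕ → Bool`. -/
def toCantor (F : Finset ℕ) : ℕ → Bool := fun n => decide (n ∈ F)

/-- Hereditary: closed under subsets. -/
def Hereditary (G : Set (Finset ℕ)) : Prop := ∀ ⦃E F : Finset ℕ⦄, E ⊆ F → F ∈ G → E ∈ G

/-- Spreading: closed under replacing elements by larger ones, keeping the
increasing order and the cardinality. -/
def Spreading (G : Set (Finset ℕ)) : Prop :=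
  ∀ (E : Finset ℕ) (f : ℕ → ℕ), StrictMonoOn f ↑E → (∀ n ∈ E, n ≤ f n) →
    E ∈ G → E.image f ∈ G

/-- Regular: compact (in the Cantor topology), hereditary and spreading. -/
def IsRegularFam (G : Set (Finset ℕ)) : Prop :=
  IsCompact (toCantor '' G) ∧ Hereditary G ∧ Spreading G

/-- The Cantor–Bendixson derivative. -/
def cbDeriv {α : Type*} [TopologicalSpace α] (K : Set α) : Set α :=
  {x | x ∈ K ∧ x ∈ closure (K \ {x})}

/-- Transfinite Cantor–Bendixson iterates. -/
noncomputable def cbIter {α : Type*} [TopologicalSpace α] (K : Set α) (ξ : Ordinal) : Set α :=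
  Ordinal.limitRecOn ξ K (fun _ S => cbDeriv S)
    (fun o _ ih => ⋂ (ζ : Ordinal) (h : ζ < o), ih ζ h)


/-- The successor step of the Schreier hierarchy:
`𝒮_{ξ+1} = {∅} ∪ {⋃_{i=1}^n Eᵢ : ∅ ≠ Eᵢ ∈ 𝒮_ξ, n ≤ E₁ < ⋯ < Eₙ}`. -/
def schreierSucc (S : Set (Finset ℕ)) : Set (Finset ℕ) :=
  {∅} ∪ {E | ∃ (n : ℕ) (hn : 0 < n) (Es : Fin n → Finset ℕ) (mins : Fin n → ℕ),
    (∀ i, Es i ∈ S ∧ (Es i).Nonempty) ∧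
    (∀ i j : Fin n, i < j → ∀ a ∈ Es i, ∀ b ∈ Es j, a < b) ∧
    (∀ i, IsLeast (↑(Es i) : Set ℕ) (mins i)) ∧
    n ≤ mins ⟨0, hn⟩ ∧
    E = Finset.univ.biUnion Es}

/-- An assignment `ξ ↦ 𝒮_ξ` is a Schreier hierarchy if `𝒮₀` is the family of sets with
at most one element, `𝒮_{ξ+1}` is obtained from `𝒮_ξ` by the admissible-union operation,
and at each countable limit ordinal `ξ` there is a sequence `ξₙ ↑ ξ` with
`𝒮_{ξₙ+1} ⊆ 𝒮_{ξ_{n+1}}` and `𝒮_ξ = {E : ∃ n ≤ min E, E ∈ 𝒮_{ξₙ+1}} ∪ {∅}`. -/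
def IsSchreierSystem (S : Ordinal → Set (Finset ℕ)) : Prop :=
  S 0 = {E : Finset ℕ | E.card ≤ 1} ∧
  (∀ ξ : Ordinal, S (ξ + 1) = schreierSucc (S ξ)) ∧
  (∀ ξ : Ordinal, ξ < (Cardinal.aleph 1).ord → Order.IsSuccLimit ξ →
    ∃ f : ℕ → Ordinal, StrictMono f ∧ (∀ n, f n < ξ) ∧ (⨆ n, f n) = ξ ∧
      (∀ n, S (f n + 1) ⊆ S (f (n + 1))) ∧
      S ξ = {E : Finset ℕ | E = ∅ ∨ ∃ n : ℕ, (∀ m ∈ E, n ≤ m) ∧ E ∈ S (f n + 1)})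

/-!
A hereditary family `G` is a tree of finite sets, and its derivative `famDeriv G` keeps the sets
with infinitely many one-point extensions in `G`. Along `toCantor` this is exactly the
Cantor–Bendixson derivative, so everything reduces to `famIter (S ξ) (ω ^ ξ) = {∅}`, proved by
induction on `ξ`, together with the same lower bound on every tail `[m, ∞)`.

A set of `𝒮_{ξ+1}` containing `a` is a union of at most `a` consecutive blocks of `𝒮_ξ`, and each
block costs `ω ^ ξ` derivatives, since the derivative of a concatenation only acts on its last
block; this gives the upper bound `ω ^ ξ * ω`. Conversely, `k` blocks placed far enough to the
right survive `ω ^ ξ * k` derivatives. At a limit, a set with an element `q` only lives in the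
finitely many families `𝒮_{ξₙ+1}`, `n ≤ q`, and the rank of a finite union of hereditary
families is the largest of their ranks. Closedness in the Cantor space holds because a family
whose iterated derivative is `{∅}` cannot contain all finite subsets of an infinite set.
-/

open Ordinal

theorem Set.Infinite.exists_infinite_of_subset_iUnion {α ι : Type*} [Finite ι] {s : Set α}
    {t : ι → Set α} (hs : s.Infinite) (h : s ⊆ ⋃ i, t i) : ∃ i, (t i).Infinite := by
  by_contra! hfin
  exact hs ((Set.finite_iUnion hfin).subset h)

theorem exists_forall_lt_of_antitone {α ι : Type*} [LinearOrder α] [OrderBot α] [Finite ι]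
    {P : ι → α → Prop} (hP : ∀ i, Antitone (P i)) {a : α} (ha : ⊥ < a)
    (h : ∀ ζ < a, ∃ i, P i ζ) : ∃ i, ∀ ζ < a, P i ζ := by
  by_contra! hbad
  choose g hga hgP using hbad
  have : Nonempty ι := (h ⊥ ha).nonempty
  obtain ⟨j, hj⟩ := Finite.exists_max g
  obtain ⟨i, hi⟩ := h (g j) (hga j)
  exact hgP i (hP i (hj i) hi)

def famDeriv (G : Set (Finset ℕ)) : Set (Finset ℕ) :=
  {E | E ∈ G ∧ {n | insert n E ∈ G}.Infinite}

noncomputable def famIter (G : Set (Finset ℕ)) (α : Ordinal) : Set (Finset ℕ) :=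
  Ordinal.limitRecOn α G (fun _ H => famDeriv H) (fun a _ ih => ⋂ (ζ) (h : ζ < a), ih ζ h)

section famIter

variable {G H : Set (Finset ℕ)}

@[simp] theorem famIter_zero (G : Set (Finset ℕ)) : famIter G 0 = G :=
  Ordinal.limitRecOn_zero ..

theorem famIter_succ (G : Set (Finset ℕ)) (α : Ordinal) :
    famIter G (α + 1) = famDeriv (famIter G α) := by
  rw [famIter, Ordinal.limitRecOn_add_one]; rfl

theorem famIter_limit (G : Set (Finset ℕ)) {α : Ordinal} (h : Order.IsSuccLimit α) :
    famIter G α = ⋂ (ζ) (_ : ζ < α), famIter G ζ := by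
  rw [famIter, Ordinal.limitRecOn_limit _ _ _ _ h]; rfl

theorem mem_famIter_limit {α : Ordinal} (h : Order.IsSuccLimit α) {E : Finset ℕ} :
    E ∈ famIter G α ↔ ∀ ζ < α, E ∈ famIter G ζ := by
  rw [famIter_limit _ h, Set.mem_iInter₂]

theorem famIter_one (G : Set (Finset ℕ)) : famIter G 1 = famDeriv G := by
  rw [← zero_add 1, famIter_succ, famIter_zero]

theorem famDeriv_subset (G : Set (Finset ℕ)) : famDeriv G ⊆ G := fun _ h => h.1

theorem famDeriv_mono (h : G ⊆ H) : famDeriv G ⊆ famDeriv H :=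
  fun _ hE => ⟨h hE.1, hE.2.mono fun _ hn => h hn⟩

theorem Hereditary.famDeriv (hG : Hereditary G) : Hereditary (famDeriv G) :=
  fun _ _ hEF hF =>
    ⟨hG hEF hF.1, hF.2.mono fun _ hn => hG (Finset.insert_subset_insert _ hEF) hn⟩

theorem famIter_mono (h : G ⊆ H) (α : Ordinal) : famIter G α ⊆ famIter H α := by
  induction α using Ordinal.limitRecOn with
  | zero => simpa using h
  | add_one a ih => rw [famIter_succ, famIter_succ]; exact famDeriv_mono ih
  | limit a ha ih =>
    intro E hE
    rw [mem_famIter_limit ha] at hE ⊢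
    exact fun ζ hζ => ih ζ hζ (hE ζ hζ)

theorem Hereditary.famIter (hG : Hereditary G) (α : Ordinal) : Hereditary (famIter G α) := by
  induction α using Ordinal.limitRecOn with
  | zero => simpa using hG
  | add_one a ih => rw [famIter_succ]; exact ih.famDeriv
  | limit a ha ih =>
    intro E F hEF hF
    rw [mem_famIter_limit ha] at hF ⊢
    exact fun ζ hζ => ih ζ hζ hEF (hF ζ hζ)

theorem famIter_antitone (G : Set (Finset ℕ)) : Antitone (famIter G) := by
  intro α β h
  induction β using Ordinal.limitRecOn with
  | zero => rw [nonpos_iff_eq_zero.1 h]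
  | add_one a ih =>
    rcases h.eq_or_lt with rfl | h'
    · rfl
    · rw [famIter_succ]
      exact (famDeriv_subset _).trans (ih (Order.lt_add_one_iff.1 h'))
  | limit a ha ih =>
    rcases h.eq_or_lt with rfl | h'
    · rfl
    · exact fun E hE => (mem_famIter_limit ha).1 hE α h'

theorem famIter_subset (G : Set (Finset ℕ)) (α : Ordinal) : famIter G α ⊆ G := by
  simpa using famIter_antitone G (zero_le (a := α))

theorem famIter_add (G : Set (Finset ℕ)) (γ δ : Ordinal) :
    famIter G (γ + δ) = famIter (famIter G γ) δ := by
  induction δ using Ordinal.limitRecOn with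
  | zero => simp
  | add_one a ih => rw [← add_assoc, famIter_succ, famIter_succ, ih]
  | limit a ha ih =>
    ext E
    rw [mem_famIter_limit ha, mem_famIter_limit (Ordinal.isSuccLimit_add γ ha)]
    constructor
    · intro hE ζ hζ
      rw [← ih ζ hζ]
      exact hE _ ((add_lt_add_iff_left γ).2 hζ)
    · intro hE β hβ
      rcases le_total β γ with hle | hle
      · exact famIter_antitone _ hle (by simpa using hE 0 ha.pos)
      · obtain ⟨δ, rfl⟩ := le_iff_exists_add.1 hle
        have hδ : δ < a := (add_lt_add_iff_left γ).1 hβ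
        exact ih δ hδ ▸ hE δ hδ

theorem union_mem_famIter {E : Finset ℕ} (h : ∀ F ∈ H, E ∪ F ∈ G) (α : Ordinal) :
    ∀ F ∈ famIter H α, E ∪ F ∈ famIter G α := by
  induction α using Ordinal.limitRecOn with
  | zero => simpa using h
  | add_one a ih =>
    rw [famIter_succ, famIter_succ]
    rintro F ⟨hF, hinf⟩
    refine ⟨ih F hF, hinf.mono fun n hn => ?_⟩
    have := ih _ hn
    rwa [Finset.union_insert] at this
  | limit a ha ih =>
    intro F hF
    rw [mem_famIter_limit ha] at hF ⊢
    exact fun ζ hζ => ih ζ hζ F (hF ζ hζ)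

theorem mem_famIter_of_forall_superset {α : Ordinal} {E : Finset ℕ} (hE : E ∈ famIter G α)
    (h : ∀ F ∈ G, E ⊆ F → F ∈ H) : E ∈ famIter H α := by
  induction α using Ordinal.limitRecOn generalizing E with
  | zero => rw [famIter_zero] at hE ⊢; exact h E hE subset_rfl
  | add_one a ih =>
    rw [famIter_succ] at hE ⊢
    refine ⟨ih hE.1 h, hE.2.mono fun n hn => ?_⟩
    exact ih hn fun F hF hsub => h F hF ((Finset.subset_insert n E).trans hsub)
  | limit a ha ih =>
    rw [mem_famIter_limit ha] at hE ⊢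
    exact fun ζ hζ => ih ζ hζ (hE ζ hζ) h

theorem famDeriv_iUnion_subset {ι : Type*} [Finite ι] {T : ι → Set (Finset ℕ)}
    (hT : ∀ i, Hereditary (T i)) : famDeriv (⋃ i, T i) ⊆ ⋃ i, famDeriv (T i) := by
  rintro E ⟨-, hinf⟩
  obtain ⟨i, hi⟩ := hinf.exists_infinite_of_subset_iUnion
    (t := fun i => {n | insert n E ∈ T i}) fun n hn => by simpa using hn
  obtain ⟨n, hn⟩ := hi.nonempty
  exact Set.mem_iUnion.2 ⟨i, hT i (Finset.subset_insert n E) hn, hi⟩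

theorem famDeriv_union_subset (hG : Hereditary G) (hH : Hereditary H) :
    famDeriv (G ∪ H) ⊆ famDeriv G ∪ famDeriv H := by
  rw [Set.union_eq_iUnion (s₁ := G)]
  refine (famDeriv_iUnion_subset (Bool.forall_bool.2 ⟨hH, hG⟩)).trans (Set.iUnion_subset ?_)
  exact Bool.forall_bool.2 ⟨Set.subset_union_right, Set.subset_union_left⟩

theorem famIter_iUnion_subset {ι : Type*} [Finite ι] {T : ι → Set (Finset ℕ)}
    (hT : ∀ i, Hereditary (T i)) (α : Ordinal) :
    famIter (⋃ i, T i) α ⊆ ⋃ i, famIter (T i) α := by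
  induction α using Ordinal.limitRecOn with
  | zero => simp
  | add_one a ih =>
    simp only [famIter_succ]
    exact (famDeriv_mono ih).trans (famDeriv_iUnion_subset fun i => (hT i).famIter a)
  | limit a ha ih =>
    intro E hE
    rw [mem_famIter_limit ha] at hE
    obtain ⟨i, hi⟩ := exists_forall_lt_of_antitone (P := fun i ζ => E ∈ famIter (T i) ζ)
      (fun i _ _ h hE => famIter_antitone _ h hE) ha.bot_lt
      fun ζ hζ => Set.mem_iUnion.1 (ih ζ hζ (hE ζ hζ))
    exact Set.mem_iUnion.2 ⟨i, (mem_famIter_limit ha).2 hi⟩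

end famIter

def BlockLt (A B : Finset ℕ) : Prop := ∀ a ∈ A, ∀ b ∈ B, a < b

def famConcat (G H : Set (Finset ℕ)) : Set (Finset ℕ) :=
  {E | ∃ A ∈ G, ∃ B ∈ H, BlockLt A B ∧ E = A ∪ B}

section famConcat

variable {G H : Set (Finset ℕ)}

theorem BlockLt.disjoint {A B : Finset ℕ} (h : BlockLt A B) : Disjoint A B :=
  Finset.disjoint_left.2 fun a ha haB => lt_irrefl a (h a ha a haB)

theorem mem_famConcat {E : Finset ℕ} :
    E ∈ famConcat G H ↔ ∃ A ⊆ E, A ∈ G ∧ BlockLt A (E \ A) ∧ E \ A ∈ H := by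
  constructor
  · rintro ⟨A, hA, B, hB, hAB, rfl⟩
    refine ⟨A, Finset.subset_union_left, hA, ?_⟩
    rw [Finset.union_sdiff_cancel_left hAB.disjoint]
    exact ⟨hAB, hB⟩
  · rintro ⟨A, hAE, hA, hAB, hB⟩
    exact ⟨A, hA, E \ A, hB, hAB, (Finset.union_sdiff_of_subset hAE).symm⟩

theorem famConcat_mono_left {G' : Set (Finset ℕ)} (h : G ⊆ G') :
    famConcat G H ⊆ famConcat G' H := by
  rintro E ⟨A, hA, B, hB, hAB, rfl⟩
  exact ⟨A, h hA, B, hB, hAB, rfl⟩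

theorem famConcat_mono_right {H' : Set (Finset ℕ)} (h : H ⊆ H') :
    famConcat G H ⊆ famConcat G H' := by
  rintro E ⟨A, hA, B, hB, hAB, rfl⟩
  exact ⟨A, hA, B, h hB, hAB, rfl⟩

theorem famConcat_singleton_empty_subset : famConcat G {∅} ⊆ G := by
  rintro E ⟨A, hA, B, rfl, -, rfl⟩
  simpa using hA

theorem Hereditary.famConcat (hG : Hereditary G) (hH : Hereditary H) :
    Hereditary (famConcat G H) := by
  rintro E F hEF ⟨A, hA, B, hB, hAB, rfl⟩
  refine ⟨E ∩ A, hG Finset.inter_subset_right hA, E ∩ B, hH Finset.inter_subset_right hB,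
    fun a ha b hb => hAB a (Finset.mem_inter.1 ha).2 b (Finset.mem_inter.1 hb).2, ?_⟩
  rw [← Finset.inter_union_distrib_left, Finset.inter_eq_left.2 hEF]

theorem Spreading.famConcat (hG : Spreading G) (hH : Spreading H) :
    Spreading (famConcat G H) := by
  rintro E f hf hle ⟨A, hA, B, hB, hAB, rfl⟩
  refine ⟨A.image f, hG A f (hf.mono (by simp)) (fun n hn => hle n (by simp [hn])) hA,
    B.image f, hH B f (hf.mono (by simp)) (fun n hn => hle n (by simp [hn])) hB, ?_,
    Finset.image_union A B⟩
  simp only [BlockLt, Finset.mem_image, forall_exists_index, and_imp]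
  rintro _ a ha rfl _ b hb rfl
  exact hf (by simp [ha]) (by simp [hb]) (hAB a ha b hb)

theorem BlockLt.insert_eq_union {A B E : Finset ℕ} {n : ℕ} (hAB : BlockLt A B)
    (hE : ∀ x ∈ E, x < n) (h : insert n E = A ∪ B) :
    E ⊆ A ∨ A ⊆ E ∧ insert n (E \ A) ⊆ B := by
  have hmem : ∀ x ∈ insert n E, x ∈ A ∨ x ∈ B := fun x hx => Finset.mem_union.1 (h ▸ hx)
  by_cases hnA : n ∈ A
  · refine Or.inl fun x hx => (hmem x (Finset.mem_insert_of_mem hx)).resolve_right fun hxB => ?_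
    exact (hAB n hnA x hxB).not_gt (hE x hx)
  · refine Or.inr ⟨fun a ha => ?_, fun x hx => ?_⟩
    · have ha' : a ∈ insert n E := h ▸ Finset.mem_union_left B ha
      exact (Finset.mem_insert.1 ha').resolve_left (by rintro rfl; exact hnA ha)
    · rcases Finset.mem_insert.1 hx with rfl | hx
      · exact (hmem x (Finset.mem_insert_self x E)).resolve_left hnA
      · rw [Finset.mem_sdiff] at hx
        exact (hmem x (Finset.mem_insert_of_mem hx.1)).resolve_left hx.2

/-- Only the last block is differentiated: among the infinitely many extensions of `E`, infinitely
many split `E` at the same place, since `E` has finitely many subsets. -/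
theorem famDeriv_famConcat_subset (hG : Hereditary G) (hH : Hereditary H) :
    famDeriv (famConcat G H) ⊆ famConcat G (famDeriv H) ∪ G := by
  rintro E ⟨-, hinf⟩
  by_cases hEG : E ∈ G
  · exact Or.inr hEG
  obtain ⟨b, hb⟩ := E.bddAbove
  have hsplit : ∀ n ∈ {n | insert n E ∈ famConcat G H} \ Set.Iic b,
      ∃ A : E.powerset, n ∈ {n | A.1 ∈ G ∧ BlockLt A (E \ A) ∧ insert n (E \ ↑A) ∈ H} := by
    rintro n ⟨⟨A, hA, B, hB, hAB, hEq⟩, hn⟩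
    have hEn : ∀ x ∈ E, x < n := fun x hx => (hb hx).trans_lt (not_le.1 hn)
    rcases hAB.insert_eq_union hEn hEq with hEA | ⟨hAE, hB'⟩
    · exact absurd (hG hEA hA) hEG
    · exact ⟨⟨A, Finset.mem_powerset.2 hAE⟩, hA,
        fun a ha c hc => hAB a ha c (hB' (Finset.mem_insert_of_mem hc)), hH hB' hB⟩
  obtain ⟨⟨A, hAE⟩, hA⟩ := (hinf.sdiff (Set.finite_Iic b)).exists_infinite_of_subset_iUnion
    fun n hn => Set.mem_iUnion.2 (hsplit n hn)
  obtain ⟨n, hAG, hAB, hn⟩ := hA.nonempty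
  refine Or.inl (mem_famConcat.2 ⟨A, Finset.mem_powerset.1 hAE, hAG, hAB,
    hH (Finset.subset_insert n _) hn, hA.mono fun n hn => hn.2.2⟩)

theorem famIter_famConcat_subset (hG : Hereditary G) (hH : Hereditary H) (α : Ordinal) :
    famIter (famConcat G H) α ⊆ famConcat G (famIter H α) ∪ G := by
  induction α using Ordinal.limitRecOn with
  | zero => simp
  | add_one a ih =>
    simp only [famIter_succ]
    calc famDeriv (famIter (famConcat G H) a)
        ⊆ famDeriv (famConcat G (famIter H a)) ∪ famDeriv G :=
          (famDeriv_mono ih).trans (famDeriv_union_subset (hG.famConcat (hH.famIter a)) hG)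
      _ ⊆ famConcat G (famDeriv (famIter H a)) ∪ G :=
          Set.union_subset (famDeriv_famConcat_subset hG (hH.famIter a))
            ((famDeriv_subset G).trans Set.subset_union_right)
  | limit a ha ih =>
    intro E hE
    rw [mem_famIter_limit ha] at hE
    by_cases hEG : E ∈ G
    · exact Or.inr hEG
    obtain ⟨A, hA⟩ := exists_forall_lt_of_antitone
      (P := fun (A : E.powerset) ζ => A.1 ∈ G ∧ BlockLt A (E \ A) ∧ E \ A ∈ famIter H ζ)
      (fun A _ _ h hA => ⟨hA.1, hA.2.1, famIter_antitone H h hA.2.2⟩) ha.bot_lt fun ζ hζ => by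
        obtain ⟨A, hAE, hA⟩ := mem_famConcat.1 ((ih ζ hζ (hE ζ hζ)).resolve_right hEG)
        exact ⟨⟨A, Finset.mem_powerset.2 hAE⟩, hA⟩
    obtain ⟨hAG, hAB, -⟩ := hA 0 ha.pos
    exact Or.inl (mem_famConcat.2 ⟨A, Finset.mem_powerset.1 A.2, hAG, hAB,
      (mem_famIter_limit ha).2 fun ζ hζ => (hA ζ hζ).2.2⟩)

end famConcat

/-- Unions of `j` consecutive blocks from `G`; blocks may be empty. -/
def famBlocks (G : Set (Finset ℕ)) : ℕ → Set (Finset ℕ)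
  | 0 => {∅}
  | j + 1 => famConcat (famBlocks G j) G

theorem Finset.biUnion_univ_fin_succ {n : ℕ} (Es : Fin (n + 1) → Finset ℕ) :
    Finset.univ.biUnion Es =
      Finset.univ.biUnion (fun i : Fin n => Es i.castSucc) ∪ Es (Fin.last n) := by
  ext a
  simp [Fin.exists_fin_succ']

section famBlocks

variable {G : Set (Finset ℕ)}

theorem Hereditary.famBlocks (hG : Hereditary G) (j : ℕ) : Hereditary (famBlocks G j) := by
  induction j with
  | zero => exact fun E F hEF (hF : F = ∅) => Finset.subset_empty.1 (hF ▸ hEF)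
  | succ j ih => exact ih.famConcat hG

theorem Spreading.famBlocks (hG : Spreading G) (j : ℕ) : Spreading (famBlocks G j) := by
  induction j with
  | zero => rintro E f - - (rfl : E = ∅); exact Finset.image_empty f
  | succ j ih => exact ih.famConcat hG

theorem famBlocks_mono (h0 : ∅ ∈ G) : Monotone (famBlocks G) := by
  refine monotone_nat_of_le_succ fun j => ?_
  induction j with
  | zero => rintro E (rfl : E = ∅); exact ⟨∅, rfl, ∅, h0, by simp [BlockLt], rfl⟩
  | succ j ih => exact famConcat_mono_left ih

theorem biUnion_mem_famBlocks {n : ℕ} {Es : Fin n → Finset ℕ} (hG : ∀ i, Es i ∈ G)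
    (hlt : ∀ i j, i < j → BlockLt (Es i) (Es j)) :
    Finset.univ.biUnion Es ∈ famBlocks G n := by
  induction n with
  | zero => simp [famBlocks]
  | succ n ih =>
    rw [Finset.biUnion_univ_fin_succ]
    refine ⟨_, ih (fun i => hG _) (fun i j h => hlt _ _ (Fin.castSucc_lt_castSucc_iff.2 h)),
      _, hG _, ?_, rfl⟩
    intro a ha b hb
    obtain ⟨i, -, hi⟩ := Finset.mem_biUnion.1 ha
    exact hlt _ _ (Fin.castSucc_lt_last i) a hi b hb

theorem exists_blocks_of_mem_famBlocks {k : ℕ} {E : Finset ℕ} (hE : E ∈ famBlocks G k) :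
    ∃ n ≤ k, ∃ Es : Fin n → Finset ℕ, (∀ i, Es i ∈ G ∧ (Es i).Nonempty) ∧
      (∀ i j, i < j → BlockLt (Es i) (Es j)) ∧ E = Finset.univ.biUnion Es := by
  induction k generalizing E with
  | zero =>
    obtain rfl : E = ∅ := hE
    exact ⟨0, le_rfl, Fin.elim0, fun i => i.elim0, fun i => i.elim0, by simp⟩
  | succ k ih =>
    obtain ⟨A, hA, B, hB, hAB, rfl⟩ := hE
    obtain ⟨n, hnk, Es, hEs, hlt, rfl⟩ := ih hA
    rcases B.eq_empty_or_nonempty with rfl | hBne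
    · exact ⟨n, hnk.trans k.le_succ, Es, hEs, hlt, Finset.union_empty _⟩
    refine ⟨n + 1, Nat.succ_le_succ hnk, Fin.snoc Es B,
      Fin.lastCases (by simpa using ⟨hB, hBne⟩) (by simpa using hEs), ?_,
      by rw [Finset.biUnion_univ_fin_succ]; simp⟩
    intro i j hij
    induction j using Fin.lastCases with
    | last =>
      obtain ⟨i, rfl⟩ := Fin.exists_castSucc_eq.2 (Fin.ne_last_of_lt hij)
      simp only [Fin.snoc_castSucc, Fin.snoc_last]
      exact fun a ha => hAB a (Finset.mem_biUnion.2 ⟨i, Finset.mem_univ _, ha⟩)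
    | cast j =>
      obtain ⟨i, rfl⟩ :=
        Fin.exists_castSucc_eq.2 (Fin.ne_last_of_lt (hij.trans (Fin.castSucc_lt_last j)))
      simpa using hlt i j (Fin.castSucc_lt_castSucc_iff.1 hij)

theorem schreierSucc_eq (h0 : ∅ ∈ G) :
    schreierSucc G = {E | ∀ a ∈ E, E ∈ famBlocks G a} := by
  ext E
  constructor
  · rintro (rfl | ⟨n, hn, Es, mins, hEs, hlt, hmins, hn0, rfl⟩)
    · simp
    intro a ha
    refine famBlocks_mono h0 (hn0.trans ?_) (biUnion_mem_famBlocks (fun i => (hEs i).1) hlt)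
    obtain ⟨i, -, hai⟩ := Finset.mem_biUnion.1 ha
    rcases (show ⟨0, hn⟩ ≤ i from Nat.zero_le _).eq_or_lt with rfl | hi
    · exact (hmins _).2 hai
    · exact (hlt _ _ hi _ (hmins _).1 a hai).le
  · intro hE
    rcases E.eq_empty_or_nonempty with rfl | hne
    · exact Or.inl rfl
    obtain ⟨n, hnq, Es, hEs, hlt, rfl⟩ := exists_blocks_of_mem_famBlocks (hE _ (E.min'_mem hne))
    have hn : 0 < n := Nat.pos_of_ne_zero (by rintro rfl; simp at hne)
    refine Or.inr ⟨n, hn, Es, fun i => (Es i).min' (hEs i).2, hEs, hlt,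
      fun i => ⟨Finset.min'_mem _ _, fun b hb => Finset.min'_le _ b hb⟩,
      hnq.trans (Finset.min'_le _ _ ?_), rfl⟩
    exact Finset.mem_biUnion.2 ⟨_, Finset.mem_univ _, Finset.min'_mem _ _⟩

theorem Hereditary.schreierSucc (hG : Hereditary G) (h0 : ∅ ∈ G) :
    Hereditary (schreierSucc G) := by
  rw [schreierSucc_eq h0]
  exact fun E F hEF hF a ha => hG.famBlocks a hEF (hF a (hEF ha))

theorem Spreading.schreierSucc (hG : Spreading G) (h0 : ∅ ∈ G) :
    Spreading (schreierSucc G) := by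
  rw [schreierSucc_eq h0]
  intro E f hf hle hE b hb
  obtain ⟨a, ha, rfl⟩ := Finset.mem_image.1 hb
  exact famBlocks_mono h0 (hle a ha) (hG.famBlocks a E f hf hle (hE a ha))

end famBlocks

def famRestrict (G : Set (Finset ℕ)) (m : ℕ) : Set (Finset ℕ) := {E ∈ G | ∀ k ∈ E, m ≤ k}

section schreierSucc

variable {G : Set (Finset ℕ)} {α : Ordinal}

theorem famIter_famBlocks_subset (hG : Hereditary G) (hα : famIter G α ⊆ {∅}) (j : ℕ) :
    famIter (famBlocks G j) (α * j) ⊆ {∅} := by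
  induction j with
  | zero => simp [famBlocks]
  | succ j ih =>
    rw [Nat.cast_succ, Nat.cast_add_one_comm, mul_add, mul_one, famIter_add]
    have hlast : famIter (famBlocks G (j + 1)) α ⊆ famBlocks G j :=
      (famIter_famConcat_subset (hG.famBlocks j) hG α).trans <| Set.union_subset
        ((famConcat_mono_right hα).trans famConcat_singleton_empty_subset) subset_rfl
    exact (famIter_mono hlast _).trans ih

theorem famIter_schreierSucc_subset (hG : Hereditary G) (h0 : ∅ ∈ G)
    (hα : famIter G α ⊆ {∅}) : famIter (schreierSucc G) (α * ω) ⊆ {∅} := by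
  intro E hE
  by_contra hne
  obtain ⟨a, ha⟩ := Finset.nonempty_iff_ne_empty.2 hne
  refine hne (famIter_famBlocks_subset hG hα a (mem_famIter_of_forall_superset
    (famIter_antitone _ (mul_le_mul_right (natCast_lt_omega0 a).le α) hE) ?_))
  intro F hF hEF
  rw [schreierSucc_eq h0] at hF
  exact hF a (hEF ha)

/-- Each further block, placed above everything so far, contributes `α` derivatives. -/
theorem mem_famIter_famRestrict_schreierSucc (h0 : ∅ ∈ G)
    (hα : ∀ m, ∅ ∈ famIter (famRestrict G m) α) (k : ℕ) {m j : ℕ} {E : Finset ℕ}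
    (hE : E ∈ famBlocks G j) (hEk : ∀ a ∈ E, m ≤ a ∧ j + k ≤ a) :
    E ∈ famIter (famRestrict (schreierSucc G) m) (α * k) := by
  induction k generalizing j E with
  | zero =>
    simp only [Nat.cast_zero, mul_zero, famIter_zero]
    refine ⟨?_, fun a ha => (hEk a ha).1⟩
    rw [schreierSucc_eq h0]
    exact fun a ha => famBlocks_mono h0 (hEk a ha).2 hE
  | succ k ih =>
    obtain ⟨b, hb⟩ := E.bddAbove
    set N := max (max m (j + k + 1)) (b + 1)
    have hgraft : ∀ F ∈ famRestrict G N,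
        E ∪ F ∈ famIter (famRestrict (schreierSucc G) m) (α * k) := by
      rintro F ⟨hF, hFN⟩
      refine ih (j := j + 1) ⟨E, hE, F, hF, fun a ha c hc => ?_, rfl⟩ fun a ha => ?_
      · have := hb ha
        have := hFN c hc
        omega
      · rcases Finset.mem_union.1 ha with ha | ha
        · have := hEk a ha
          omega
        · have := hFN a ha
          omega
    rw [Nat.cast_succ, mul_add_one, famIter_add]
    simpa using union_mem_famIter hgraft α ∅ (hα N)

theorem empty_mem_famIter_famRestrict_schreierSucc
    (hα : ∀ m, ∅ ∈ famIter (famRestrict G m) α) (m : ℕ) :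
    ∅ ∈ famIter (famRestrict (schreierSucc G) m) (α * ω) := by
  have h0 : ∅ ∈ G := (famIter_subset _ _ (hα 0)).1
  have hk (k : ℕ) := mem_famIter_famRestrict_schreierSucc h0 hα k (m := m) (j := 0) rfl (by simp)
  rcases eq_zero_or_pos α with rfl | hα0
  · simpa using hk 0
  rw [mem_famIter_limit (isSuccLimit_mul_right hα0 isSuccLimit_omega0)]
  intro β hβ
  obtain ⟨c, hc, hβc⟩ := (lt_mul_iff_of_isSuccLimit isSuccLimit_omega0).1 hβ
  obtain ⟨k, rfl⟩ := lt_omega0.1 hc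
  exact famIter_antitone _ hβc.le (hk k)

end schreierSucc

/-- Rank `α` means `famIter G α = {∅}`, i.e. Cantor–Bendixson index `α + 1`. The lower bound is
required on every tail `[m, ∞)`: this uniformity is what survives the admissibility condition
`n ≤ min E₁` of the successor step. -/
structure IsRegularOfRank (G : Set (Finset ℕ)) (α : Ordinal) : Prop where
  hereditary : Hereditary G
  spreading : Spreading G
  empty_mem_famIter_famRestrict : ∀ m, ∅ ∈ famIter (famRestrict G m) α
  famIter_subset_singleton : famIter G α ⊆ {∅}

namespace IsRegularOfRank

variable {G : Set (Finset ℕ)} {α : Ordinal}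

theorem empty_mem_famIter (h : IsRegularOfRank G α) : ∅ ∈ famIter G α :=
  famIter_mono (fun _ hE => hE.1) α (h.empty_mem_famIter_famRestrict 0)

theorem famIter_eq_singleton (h : IsRegularOfRank G α) : famIter G α = {∅} :=
  h.famIter_subset_singleton.antisymm (Set.singleton_subset_iff.2 h.empty_mem_famIter)

theorem empty_mem (h : IsRegularOfRank G α) : ∅ ∈ G :=
  famIter_subset G α h.empty_mem_famIter

theorem schreierSucc (h : IsRegularOfRank G α) : IsRegularOfRank (schreierSucc G) (α * ω) where
  hereditary := h.hereditary.schreierSucc h.empty_mem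
  spreading := h.spreading.schreierSucc h.empty_mem
  empty_mem_famIter_famRestrict :=
    empty_mem_famIter_famRestrict_schreierSucc h.empty_mem_famIter_famRestrict
  famIter_subset_singleton :=
    famIter_schreierSucc_subset h.hereditary h.empty_mem h.famIter_subset_singleton

end IsRegularOfRank

theorem isRegularOfRank_card_le_one : IsRegularOfRank {E : Finset ℕ | E.card ≤ 1} 1 where
  hereditary _ _ hEF hF := (Finset.card_le_card hEF).trans hF
  spreading _ _ _ _ hE := Finset.card_image_le.trans hE
  empty_mem_famIter_famRestrict m := by
    rw [famIter_one]
    refine ⟨⟨by simp, by simp⟩, Set.infinite_of_forall_exists_gt fun N => ⟨max m N + 1, ?_, ?_⟩⟩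
    · refine ⟨by simp, ?_⟩
      simp only [insert_empty_eq, Finset.mem_singleton, forall_eq]
      omega
    · omega
  famIter_subset_singleton := by
    rw [famIter_one]
    rintro E ⟨hE, hinf⟩
    by_contra hne
    refine hinf (E.finite_toSet.subset fun n (hn : (insert n E).card ≤ 1) => ?_)
    by_contra hnE
    have := Finset.card_pos.2 (Finset.nonempty_iff_ne_empty.2 hne)
    rw [Finset.card_insert_of_notMem hnE] at hn
    omega

def famDiagonal (T : ℕ → Set (Finset ℕ)) : Set (Finset ℕ) :=
  {E | E = ∅ ∨ ∃ n : ℕ, (∀ m ∈ E, n ≤ m) ∧ E ∈ T n}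

section famDiagonal

variable {T : ℕ → Set (Finset ℕ)}

theorem Hereditary.famDiagonal (hT : ∀ n, Hereditary (T n)) : Hereditary (famDiagonal T) := by
  rintro E F hEF (rfl | ⟨n, hn, hF⟩)
  · exact Or.inl (Finset.subset_empty.1 hEF)
  · exact Or.inr ⟨n, fun m hm => hn m (hEF hm), hT n hEF hF⟩

theorem Spreading.famDiagonal (hT : ∀ n, Spreading (T n)) : Spreading (famDiagonal T) := by
  rintro E f hf hle (rfl | ⟨n, hn, hE⟩)
  · exact Or.inl (Finset.image_empty f)
  · refine Or.inr ⟨n, ?_, hT n E f hf hle hE⟩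
    simp only [Finset.mem_image, forall_exists_index, and_imp]
    rintro _ a ha rfl
    exact (hn a ha).trans (hle a ha)

theorem isRegularOfRank_famDiagonal {β : ℕ → Ordinal} {γ : Ordinal}
    (hT : ∀ n, IsRegularOfRank (T n) (β n)) (hβ : Monotone β) (hγ : Order.IsSuccLimit γ)
    (hβγ : ∀ n, β n ≤ γ) (hγβ : ∀ δ < γ, ∃ n, δ ≤ β n) :
    IsRegularOfRank (famDiagonal T) γ where
  hereditary := .famDiagonal fun n => (hT n).hereditary
  spreading := .famDiagonal fun n => (hT n).spreading
  empty_mem_famIter_famRestrict m := by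
    rw [mem_famIter_limit hγ]
    intro δ hδ
    obtain ⟨n, hn⟩ := hγβ δ hδ
    have hsub : famRestrict (T (max m n)) (max m n) ⊆ famRestrict (famDiagonal T) m :=
      fun E hE => ⟨Or.inr ⟨_, hE.2, hE.1⟩, fun k hk => (le_max_left m n).trans (hE.2 k hk)⟩
    exact famIter_antitone _ (hn.trans (hβ (le_max_right m n)))
      (famIter_mono hsub _ ((hT _).empty_mem_famIter_famRestrict _))
  famIter_subset_singleton := by
    intro E hE
    by_contra hne
    obtain ⟨q, hq⟩ := Finset.nonempty_iff_ne_empty.2 hne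
    have hsup : ∀ F ∈ famDiagonal T, E ⊆ F → F ∈ ⋃ i : Fin (q + 1), T i := by
      rintro F (rfl | ⟨n, hn, hF⟩) hEF
      · exact absurd (Finset.subset_empty.1 hEF) hne
      · exact Set.mem_iUnion.2 ⟨⟨n, Nat.lt_succ_of_le (hn q (hEF hq))⟩, hF⟩
    obtain ⟨i, hi⟩ := Set.mem_iUnion.1 <|
      famIter_iUnion_subset (T := fun i : Fin (q + 1) => T i) (fun i => (hT i).hereditary) (β q)
        (mem_famIter_of_forall_superset (famIter_antitone _ (hβγ q) hE) hsup)
    exact hne ((hT i).famIter_subset_singleton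
      (famIter_antitone _ (hβ (Nat.le_of_lt_succ i.2)) hi))

end famDiagonal

theorem IsSchreierSystem.isRegularOfRank {S : Ordinal → Set (Finset ℕ)}
    (hS : IsSchreierSystem S) {ξ : Ordinal} (hξ : ξ < (Cardinal.aleph 1).ord) :
    IsRegularOfRank (S ξ) (ω ^ ξ) := by
  induction ξ using Ordinal.limitRecOn with
  | zero => rw [hS.1, opow_zero]; exact isRegularOfRank_card_le_one
  | add_one ξ ih =>
    rw [hS.2.1, opow_add_one]
    exact (ih ((lt_add_one ξ).trans hξ)).schreierSucc
  | limit ξ hlim ih =>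
    obtain ⟨f, hf, hfξ, hfsup, -, hSξ⟩ := hS.2.2 ξ hξ hlim
    have hfξ' (n : ℕ) : f n + 1 < ξ := hlim.add_one_lt (hfξ n)
    rw [hSξ]
    refine isRegularOfRank_famDiagonal (fun n => ih _ (hfξ' n) ((hfξ' n).trans hξ))
      (fun m n h => opow_le_opow_right omega0_pos (add_le_add_left (hf.monotone h) 1))
      (isSuccLimit_opow one_lt_omega0 hlim) (fun n => opow_le_opow_right omega0_pos (hfξ' n).le)
      fun δ hδ => ?_
    obtain ⟨ζ, hζ, hδζ⟩ := (lt_opow_of_isSuccLimit omega0_ne_zero hlim).1 hδ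
    obtain ⟨n, hn⟩ := Ordinal.lt_iSup_iff.1 (hfsup ▸ hζ)
    exact ⟨n, hδζ.le.trans (opow_le_opow_right omega0_pos (hn.le.trans (le_add_right le_rfl)))⟩

theorem mem_closure_iff_cylinder {β : Type*} [TopologicalSpace β] [DiscreteTopology β]
    {s : Set (ℕ → β)} {x : ℕ → β} :
    x ∈ closure s ↔ ∀ n, (PiNat.cylinder x n ∩ s).Nonempty := by
  rw [(PiNat.isTopologicalBasis_cylinders fun _ => β).mem_closure_iff]
  refine ⟨fun h n => h _ ⟨x, n, rfl⟩ (PiNat.self_mem_cylinder x n), ?_⟩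
  rintro h _ ⟨y, n, rfl⟩ hx
  rw [← PiNat.mem_cylinder_iff_eq.1 hx]
  exact h n

theorem toCantor_injective : Function.Injective toCantor := fun E F h =>
  Finset.ext fun n => by simpa [toCantor] using congrFun h n

theorem toCantor_mem_cylinder {E F : Finset ℕ} {n : ℕ} :
    toCantor F ∈ PiNat.cylinder (toCantor E) n ↔ ∀ i < n, (i ∈ F ↔ i ∈ E) := by
  simp [PiNat.mem_cylinder_iff, toCantor]

@[simp] theorem cbIter_zero {α : Type*} [TopologicalSpace α] (K : Set α) : cbIter K 0 = K :=
  Ordinal.limitRecOn_zero ..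

theorem cbIter_succ {α : Type*} [TopologicalSpace α] (K : Set α) (β : Ordinal) :
    cbIter K (β + 1) = cbDeriv (cbIter K β) := by
  rw [cbIter, Ordinal.limitRecOn_add_one]; rfl

theorem cbIter_limit {α : Type*} [TopologicalSpace α] (K : Set α) {β : Ordinal}
    (h : Order.IsSuccLimit β) : cbIter K β = ⋂ (ζ) (_ : ζ < β), cbIter K ζ := by
  rw [cbIter, Ordinal.limitRecOn_limit _ _ _ _ h]; rfl

section Cantor

variable {G : Set (Finset ℕ)}

theorem cbDeriv_image_toCantor (hG : Hereditary G) :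
    cbDeriv (toCantor '' G) = toCantor '' famDeriv G := by
  ext x
  constructor
  · rintro ⟨⟨E, hE, rfl⟩, hcl⟩
    refine ⟨E, ⟨hE, Set.infinite_of_forall_exists_gt fun N => ?_⟩, rfl⟩
    obtain ⟨b, hb⟩ := E.bddAbove
    obtain ⟨_, hcyl, ⟨F, hF, rfl⟩, hne⟩ := mem_closure_iff_cylinder.1 hcl (N + b + 1)
    rw [toCantor_mem_cylinder] at hcyl
    have hEF : E ⊆ F := fun a ha => (hcyl a (by have := hb ha; omega)).2 ha
    obtain ⟨n, hnF, hnE⟩ := Finset.not_subset.1 fun hFE : F ⊆ E =>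
      hne (congrArg toCantor (hFE.antisymm hEF))
    refine ⟨n, hG (Finset.insert_subset hnF hEF) hF, ?_⟩
    by_contra! hn
    exact hnE ((hcyl n (by omega)).1 hnF)
  · rintro ⟨E, ⟨hE, hinf⟩, rfl⟩
    refine ⟨⟨E, hE, rfl⟩, mem_closure_iff_cylinder.2 fun N => ?_⟩
    obtain ⟨b, hb⟩ := E.bddAbove
    obtain ⟨n, hn, hNn⟩ := hinf.exists_gt (max N b)
    have hnE : n ∉ E := fun h => by have := hb h; omega
    refine ⟨toCantor (insert n E), toCantor_mem_cylinder.2 fun i hi => ?_, ⟨_, hn, rfl⟩, ?_⟩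
    · rw [Finset.mem_insert, or_iff_right (by omega)]
    · exact fun h => hnE (toCantor_injective h ▸ Finset.mem_insert_self n E)

theorem cbIter_image_toCantor (hG : Hereditary G) (α : Ordinal) :
    cbIter (toCantor '' G) α = toCantor '' famIter G α := by
  induction α using Ordinal.limitRecOn with
  | zero => simp
  | add_one a ih => rw [cbIter_succ, famIter_succ, ih, cbDeriv_image_toCantor (hG.famIter a)]
  | limit a ha ih =>
    rw [cbIter_limit _ ha, famIter_limit _ ha,
      toCantor_injective.injOn.image_biInter_eq ⟨0, ha.pos⟩]
    exact Set.iInter₂_congr ih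

theorem mem_famIter_of_subset_of_infinite {A : Set ℕ} (hA : A.Infinite)
    (hG : ∀ F : Finset ℕ, ↑F ⊆ A → F ∈ G) (α : Ordinal) {F : Finset ℕ} (hF : ↑F ⊆ A) :
    F ∈ famIter G α := by
  induction α using Ordinal.limitRecOn generalizing F with
  | zero => simpa using hG F hF
  | add_one a ih =>
    rw [famIter_succ]
    refine ⟨ih hF, (hA.sdiff F.finite_toSet).mono fun n hn => ih ?_⟩
    rw [Finset.coe_insert]
    exact Set.insert_subset hn.1 hF
  | limit a ha ih => exact (mem_famIter_limit ha).2 fun ζ hζ => ih ζ hζ hF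

theorem isClosed_image_toCantor (hG : Hereditary G) {α : Ordinal} (hα : famIter G α ⊆ {∅}) :
    IsClosed (toCantor '' G) := by
  refine isClosed_of_closure_subset fun x hx => ?_
  set A : Set ℕ := {n | x n = true}
  have hsub : ∀ F : Finset ℕ, ↑F ⊆ A → F ∈ G := by
    intro F hFA
    obtain ⟨b, hb⟩ := F.bddAbove
    obtain ⟨_, hcyl, F', hF', rfl⟩ := mem_closure_iff_cylinder.1 hx (b + 1)
    refine hG (fun i hi => ?_) hF'
    have hxi : x i = true := hFA hi
    simpa [PiNat.mem_cylinder_iff, toCantor, hxi] using hcyl i (Nat.lt_succ_of_le (hb hi))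
  by_cases hAfin : A.Finite
  · refine ⟨hAfin.toFinset, hsub _ (by simp), funext fun n => ?_⟩
    simp [toCantor, A]
  · obtain ⟨a, ha⟩ := Set.Infinite.nonempty hAfin
    have := hα (mem_famIter_of_subset_of_infinite hAfin hsub α (F := {a}) (by simpa using ha))
    simp at this

end Cantor

namespace IsRegularOfRank

variable {G : Set (Finset ℕ)} {α : Ordinal}

theorem isRegularFam (h : IsRegularOfRank G α) : IsRegularFam G :=
  ⟨(isClosed_image_toCantor h.hereditary h.famIter_subset_singleton).isCompact, h.hereditary,
    h.spreading⟩

theorem cbIter_add_one_eq_empty (h : IsRegularOfRank G α) :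
    cbIter (toCantor '' G) (α + 1) = ∅ := by
  rw [cbIter_image_toCantor h.hereditary, famIter_succ, h.famIter_eq_singleton,
    Set.image_eq_empty]
  ext E
  simp [famDeriv]

theorem cbIter_ne_empty (h : IsRegularOfRank G α) : cbIter (toCantor '' G) α ≠ ∅ := by
  simp [cbIter_image_toCantor h.hereditary, h.famIter_eq_singleton]

end IsRegularOfRank

/-- For every countable ordinal `ξ`, the Schreier family `𝒮_ξ` is regular and its
Cantor–Bendixson index equals `ω^ξ + 1`. -/
theorem schreier_regular_CB (S : Ordinal → Set (Finset ℕ)) (hS : IsSchreierSystem S)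
    (ξ : Ordinal) (hξ : ξ < (Cardinal.aleph 1).ord) :
    IsRegularFam (S ξ) ∧
    cbIter (toCantor '' S ξ) (Ordinal.omega0 ^ ξ + 1) = ∅ ∧
    cbIter (toCantor '' S ξ) (Ordinal.omega0 ^ ξ) ≠ ∅ := by
  have h := hS.isRegularOfRank hξ
  exact ⟨h.isRegularFam, h.cbIter_add_one_eq_empty, h.cbIter_ne_empty⟩
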